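/- Let δ ∈ (0,1) and ε ∈ (0,1) be constants, and for each n ≥ 2 let (K_n, λ) be a random simple temporal graph on n vertices. Let k_0(n) = 2 ln n / ln(1/δ) and set k_n = ⌊(1−ε)·k_0(n)⌋. Then E[X^{(k_n)}] → ∞ as n → ∞. -/

import Mathlib

/-!
First moment method. A `k`-set is a `δ`-temporal clique as soon as all `C(k,2)` labels inside it
fall in `[0, δ]`, so by independence `E[X^{(k)}] ≥ C(n,k) δ^{C(k,2)}`. Bounding
`C(n,k) ≥ ((n + 1 - k) / k)^k` and `δ^{C(k,2)} ≥ (√δ^k)^k` gives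
`E[X^{(k)}] ≥ ((n + 1 - k) / k · √δ^k)^k`. For `k = k_n` one has `k_n ln(1/δ) / 2 ≤ (1 - ε) ln n`,
i.e. `n √δ^{k_n} ≥ n^ε`, so the base is at least `n^ε / k_n - 1`, which exceeds `2` eventually
because `k_n = O(ln n)`; as `k_n → ∞`, the bound tends to infinity.
-/

open MeasureTheory ProbabilityTheory

/-- The edge set of the complete graph `K_n` on vertex set `Fin n`:
unordered pairs of distinct vertices. -/
def EdgeKn (n : ℕ) : Type := {e : Sym2 (Fin n) // ¬ e.IsDiag}

/-- `Q` is a `δ`-temporal clique for the labeling `lam` if any two edges with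
both endpoints in `Q` carry labels at most `δ` apart. -/
def IsTemporalClique {n : ℕ} (lam : EdgeKn n → ℝ) (δ : ℝ) (Q : Finset (Fin n)) : Prop :=
  ∀ e e' : EdgeKn n, (∀ v ∈ e.1, v ∈ Q) → (∀ v ∈ e'.1, v ∈ Q) →
    |lam e - lam e'| ≤ δ

open scoped Classical in
/-- The number of `k`-element vertex subsets of `Fin n` that are `δ`-temporal cliques. -/
noncomputable def cliqueCount {n : ℕ} (lam : EdgeKn n → ℝ) (δ : ℝ) (k : ℕ) : ℕ :=
  ((Finset.univ.powersetCard k).filter (fun Q => IsTemporalClique lam δ Q)).card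

open Finset Filter Real

instance (n : ℕ) : Fintype (EdgeKn n) :=
  inferInstanceAs (Fintype {e : Sym2 (Fin n) // ¬ e.IsDiag})

open scoped Classical in
lemma card_edges_subset_le {n : ℕ} (Q : Finset (Fin n)) :
    #{e : EdgeKn n | ∀ v ∈ e.1, v ∈ Q} ≤ (#Q).choose 2 := by
  rw [← Sym2.card_image_offDiag]
  refine card_le_card_of_injOn (fun e => e.1) (fun e he => ?_) (fun e _ e' _ h => Subtype.ext h)
  obtain ⟨⟨x, y⟩, hxy⟩ := Quot.exists_rep e.1
  have hne : x ≠ y := fun h => e.2 (by rw [← hxy, h]; exact Sym2.mk_isDiag_iff.2 rfl)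
  simp only [coe_filter, mem_univ, true_and] at he
  simp only [coe_image, Set.mem_image, mem_coe, mem_offDiag]
  exact ⟨(x, y), ⟨he x (hxy ▸ Sym2.mem_mk_left x y), he y (hxy ▸ Sym2.mem_mk_right x y), hne⟩, hxy⟩

section Probability

variable {Ω : Type*} [MeasurableSpace Ω] {μ : Measure Ω}

lemma integral_card_filter [IsFiniteMeasure μ] {ι : Type*} (s : Finset ι) (p : ι → Ω → Prop)
    [∀ i ω, Decidable (p i ω)] (hp : ∀ i, MeasurableSet {ω | p i ω}) :
    ∫ ω, (#(s.filter (p · ω)) : ℝ) ∂μ = ∑ i ∈ s, μ.real {ω | p i ω} := by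
  have hsum : ∀ ω, (#(s.filter (p · ω)) : ℝ) = ∑ i ∈ s, {ω | p i ω}.indicator 1 ω := fun ω => by
    simp [Set.indicator_apply]
  simp_rw [hsum]
  rw [integral_finsetSum _ fun i _ => (integrable_const 1).indicator (hp i)]
  exact sum_congr rfl fun i _ => integral_indicator_one (hp i)

lemma measureReal_biInter_preimage_Icc_eq_pow {ι : Type*} {X : ι → Ω → ℝ} (hX : iIndepFun X μ)
    (hmeas : ∀ i, Measurable (X i))
    (hunif : ∀ i, μ.map (X i) = (volume : Measure ℝ).restrict (Set.Icc 0 1))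
    {δ : ℝ} (hδ0 : 0 ≤ δ) (hδ1 : δ ≤ 1) (S : Finset ι) :
    μ.real (⋂ i ∈ S, X i ⁻¹' Set.Icc 0 δ) = δ ^ #S := by
  have hmarg : ∀ i, μ (X i ⁻¹' Set.Icc 0 δ) = ENNReal.ofReal δ := fun i => by
    rw [← Measure.map_apply (hmeas i) measurableSet_Icc, hunif i,
      Measure.restrict_apply measurableSet_Icc,
      Set.inter_eq_left.2 (Set.Icc_subset_Icc le_rfl hδ1), Real.volume_Icc, sub_zero]
  rw [measureReal_def, hX.measure_inter_preimage_eq_mul S fun _ _ => measurableSet_Icc,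
    prod_congr rfl fun i _ => hmarg i, prod_const, ENNReal.toReal_pow,
    ENNReal.toReal_ofReal hδ0]

lemma measurableSet_isTemporalClique {n : ℕ} {lam : EdgeKn n → Ω → ℝ}
    (hmeas : ∀ e, Measurable (lam e)) (δ : ℝ) (Q : Finset (Fin n)) :
    MeasurableSet {ω | IsTemporalClique (fun e => lam e ω) δ Q} := by
  simp only [IsTemporalClique, Set.ofPred_forall]
  exact .iInter fun e => .iInter fun e' => .iInter fun _ => .iInter fun _ =>
    measurableSet_le ((hmeas e).sub (hmeas e')).abs measurable_const

section RandomTemporalGraph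

variable [IsFiniteMeasure μ] {n : ℕ} {lam : EdgeKn n → Ω → ℝ} {δ : ℝ}

lemma pow_choose_two_le_measureReal_isTemporalClique (hindep : iIndepFun lam μ)
    (hmeas : ∀ e, Measurable (lam e))
    (hunif : ∀ e, μ.map (lam e) = (volume : Measure ℝ).restrict (Set.Icc 0 1))
    (hδ0 : 0 ≤ δ) (hδ1 : δ ≤ 1) (Q : Finset (Fin n)) :
    δ ^ (#Q).choose 2 ≤ μ.real {ω | IsTemporalClique (fun e => lam e ω) δ Q} := by
  classical
  set S : Finset (EdgeKn n) := {e | ∀ v ∈ e.1, v ∈ Q}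
  have hsub : ⋂ e ∈ S, lam e ⁻¹' Set.Icc 0 δ ⊆ {ω | IsTemporalClique (fun e => lam e ω) δ Q} := by
    intro ω hω e e' he he'
    have hlabel : ∀ e ∈ S, lam e ω ∈ Set.Icc 0 δ := Set.mem_iInter₂.1 hω
    obtain ⟨h0, h1⟩ := hlabel e (by simpa [S] using he)
    obtain ⟨h0', h1'⟩ := hlabel e' (by simpa [S] using he')
    exact abs_sub_le_of_nonneg_of_le h0 h1 h0' h1'
  calc δ ^ (#Q).choose 2 ≤ δ ^ #S := pow_le_pow_of_le_one hδ0 hδ1 (card_edges_subset_le Q)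
    _ = μ.real (⋂ e ∈ S, lam e ⁻¹' Set.Icc 0 δ) :=
      (measureReal_biInter_preimage_Icc_eq_pow hindep hmeas hunif hδ0 hδ1 S).symm
    _ ≤ _ := measureReal_mono hsub

lemma choose_mul_pow_choose_two_le_integral_cliqueCount (hindep : iIndepFun lam μ)
    (hmeas : ∀ e, Measurable (lam e))
    (hunif : ∀ e, μ.map (lam e) = (volume : Measure ℝ).restrict (Set.Icc 0 1))
    (hδ0 : 0 ≤ δ) (hδ1 : δ ≤ 1) (k : ℕ) :
    (n.choose k : ℝ) * δ ^ k.choose 2 ≤ ∫ ω, (cliqueCount (fun e => lam e ω) δ k : ℝ) ∂μ := by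
  classical
  unfold cliqueCount
  rw [integral_card_filter _ _ (measurableSet_isTemporalClique hmeas δ)]
  calc (n.choose k : ℝ) * δ ^ k.choose 2 = #(univ.powersetCard k) • δ ^ k.choose 2 := by simp
    _ ≤ _ := card_nsmul_le_sum _ _ _ fun Q hQ => mem_powersetCard_univ.1 hQ ▸
      pow_choose_two_le_measureReal_isTemporalClique hindep hmeas hunif hδ0 hδ1 Q

end RandomTemporalGraph

end Probability

lemma pow_div_mul_sqrt_pow_pow_le_choose_mul_pow {δ : ℝ} (hδ0 : 0 ≤ δ) (hδ1 : δ ≤ 1)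
    (n k : ℕ) : ((n + 1 - k : ℕ) / k * √δ ^ k : ℝ) ^ k ≤ n.choose k * δ ^ k.choose 2 := by
  have hfact : (k.factorial : ℝ) ≤ (k : ℝ) ^ k := by exact_mod_cast k.factorial_le_pow
  have hchoose : (((n + 1 - k : ℕ) : ℝ) / k) ^ k ≤ n.choose k := by
    rw [div_pow]
    exact (div_le_div_of_nonneg_left (by positivity) (by positivity) hfact).trans
      (Nat.pow_le_choose k n)
  have hexp : 2 * k.choose 2 ≤ k * k := by
    rw [Nat.choose_two_right]
    exact (Nat.mul_div_le _ 2).trans (Nat.mul_le_mul_left k (Nat.sub_le k 1))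
  have hsqrt : (√δ ^ k) ^ k ≤ δ ^ k.choose 2 :=
    calc (√δ ^ k) ^ k = √δ ^ (k * k) := (pow_mul _ _ _).symm
      _ ≤ √δ ^ (2 * k.choose 2) :=
        pow_le_pow_of_le_one (sqrt_nonneg δ) (sqrt_le_one.2 hδ1) hexp
      _ = δ ^ k.choose 2 := by rw [pow_mul, sq_sqrt hδ0]
  rw [mul_pow]
  exact mul_le_mul hchoose hsqrt (by positivity) (by positivity)

lemma tendsto_pow_atTop_of_two_le {α : Type*} {l : Filter α} {b : α → ℝ} {k : α → ℕ}
    (hk : Tendsto k l atTop) (hb : ∀ᶠ a in l, 2 ≤ b a) :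
    Tendsto (fun a => b a ^ k a) l atTop :=
  tendsto_atTop_mono' l (hb.mono fun _ h => pow_le_pow_left₀ zero_le_two h _)
    ((tendsto_pow_atTop_atTop_of_one_lt one_lt_two).comp hk)

noncomputable def cliqueSize (δ ε : ℝ) (n : ℕ) : ℕ :=
  ⌊(1 - ε) * (2 * Real.log n / Real.log (1 / δ))⌋₊

section CliqueSize

variable {δ ε : ℝ}

lemma cliqueSize_mul_log_le (hδ0 : 0 < δ) (hδ1 : δ < 1) (hε1 : ε < 1) (n : ℕ) :
    cliqueSize δ ε n * log (1 / δ) ≤ (1 - ε) * (2 * log n) := by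
  have hL : 0 < log (1 / δ) := log_pos (one_lt_one_div hδ0 hδ1)
  rw [← le_div_iff₀ hL, mul_div_assoc]
  exact Nat.floor_le (by have := Real.log_natCast_nonneg n; bound)

lemma tendsto_cliqueSize_atTop (hδ0 : 0 < δ) (hδ1 : δ < 1) (hε1 : ε < 1) :
    Tendsto (cliqueSize δ ε) atTop atTop := by
  have hL : 0 < log (1 / δ) := log_pos (one_lt_one_div hδ0 hδ1)
  have hc : 0 < (1 - ε) * 2 / log (1 / δ) := by bound
  refine tendsto_nat_floor_atTop.comp ?_
  convert (tendsto_log_atTop.comp tendsto_natCast_atTop_atTop).const_mul_atTop hc using 2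
  simp only [Function.comp_apply]
  ring

lemma rpow_le_mul_sqrt_pow_cliqueSize (hδ0 : 0 < δ) (hδ1 : δ < 1) (hε1 : ε < 1) {n : ℕ}
    (hn : 0 < n) : (n : ℝ) ^ ε ≤ n * √δ ^ cliqueSize δ ε n := by
  have hn' : (0 : ℝ) < n := Nat.cast_pos.2 hn
  have hk := cliqueSize_mul_log_le hδ0 hδ1 hε1 n
  have hlog : log √δ = -log (1 / δ) / 2 := by rw [log_sqrt hδ0.le, one_div, log_inv, neg_neg]
  calc (n : ℝ) ^ ε = exp (ε * log n) := by rw [rpow_def_of_pos hn', mul_comm]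
    _ ≤ exp (log n + cliqueSize δ ε n * log √δ) := exp_le_exp.2 (by rw [hlog]; linarith)
    _ = n * √δ ^ cliqueSize δ ε n := by
      rw [exp_add, exp_log hn', exp_nat_mul, exp_log (sqrt_pos.2 hδ0)]

lemma eventually_three_mul_cliqueSize_le_rpow (hδ0 : 0 < δ) (hδ1 : δ < 1) (hε0 : 0 < ε)
    (hε1 : ε < 1) : ∀ᶠ n : ℕ in atTop, 3 * (cliqueSize δ ε n : ℝ) ≤ (n : ℝ) ^ ε := by
  have hL : 0 < log (1 / δ) := log_pos (one_lt_one_div hδ0 hδ1)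
  filter_upwards [tendsto_natCast_atTop_atTop.eventually
    ((isLittleO_log_rpow_atTop hε0).bound (by positivity : 0 < log (1 / δ) / 6))] with n hn
  have hk := cliqueSize_mul_log_le hδ0 hδ1 hε1 n
  have hlogn := Real.log_natCast_nonneg n
  rw [norm_of_nonneg hlogn, norm_of_nonneg (by positivity)] at hn
  nlinarith

lemma eventually_two_le_div_mul_sqrt_pow_cliqueSize (hδ0 : 0 < δ) (hδ1 : δ < 1) (hε0 : 0 < ε)
    (hε1 : ε < 1) : ∀ᶠ n : ℕ in atTop,
      2 ≤ ((n + 1 - cliqueSize δ ε n : ℕ) / cliqueSize δ ε n * √δ ^ cliqueSize δ ε n : ℝ) := by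
  filter_upwards [eventually_three_mul_cliqueSize_le_rpow hδ0 hδ1 hε0 hε1,
    (tendsto_cliqueSize_atTop hδ0 hδ1 hε1).eventually_ge_atTop 1, eventually_gt_atTop 0]
    with n hbound hk1 hn
  set k := cliqueSize δ ε n
  have hs0 : 0 ≤ √δ ^ k := by positivity
  have hs1 : √δ ^ k ≤ 1 := pow_le_one₀ (sqrt_nonneg δ) (sqrt_le_one.2 hδ1.le)
  have hbase := rpow_le_mul_sqrt_pow_cliqueSize hδ0 hδ1 hε1 hn
  have hcast : (n : ℝ) - k ≤ ((n + 1 - k : ℕ) : ℝ) := by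
    rw [sub_le_iff_le_add]; exact_mod_cast (by omega : n ≤ n + 1 - k + k)
  rw [div_mul_eq_mul_div, le_div_iff₀ (by exact_mod_cast hk1)]
  nlinarith [mul_le_mul_of_nonneg_right hcast hs0]

end CliqueSize

lemma tendsto_choose_mul_pow_choose_two_cliqueSize {δ ε : ℝ} (hδ0 : 0 < δ) (hδ1 : δ < 1)
    (hε0 : 0 < ε) (hε1 : ε < 1) :
    Tendsto (fun n : ℕ => (n.choose (cliqueSize δ ε n) : ℝ) * δ ^ (cliqueSize δ ε n).choose 2)
      atTop atTop :=
  tendsto_atTop_mono (fun n => pow_div_mul_sqrt_pow_pow_le_choose_mul_pow hδ0.le hδ1.le n _)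
    (tendsto_pow_atTop_of_two_le (tendsto_cliqueSize_atTop hδ0 hδ1 hε1)
      (eventually_two_le_div_mul_sqrt_pow_cliqueSize hδ0 hδ1 hε0 hε1))

open Filter in
/-- For constants `δ ∈ (0,1)` and `ε ∈ (0,1)`, with `k₀(n) = 2 ln n / ln(1/δ)`
and `k_n = ⌊(1-ε) k₀(n)⌋`, the expected number of `δ`-temporal cliques of size `k_n`
in the random simple temporal graph `(K_n, λ)` tends to `∞` as `n → ∞`. -/
theorem stmt9
    (δ : ℝ) (hδ0 : 0 < δ) (hδ1 : δ < 1) (ε : ℝ) (hε0 : 0 < ε) (hε1 : ε < 1)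
    {Ω : ℕ → Type*} [∀ n, MeasurableSpace (Ω n)]
    (P : ∀ n, Measure (Ω n)) (hP : ∀ n, IsProbabilityMeasure (P n))
    (lam : ∀ n, EdgeKn n → Ω n → ℝ) (hmeas : ∀ n e, Measurable (lam n e))
    (hindep : ∀ n, iIndepFun (lam n) (P n))
    (hunif : ∀ n e, Measure.map (lam n e) (P n) = (volume : Measure ℝ).restrict (Set.Icc 0 1))
    (kseq : ℕ → ℕ)
    (hk : ∀ n, kseq n = ⌊(1 - ε) * (2 * Real.log n / Real.log (1/δ))⌋₊) :
    Tendsto (fun n => ∫ ω, (cliqueCount (fun e => lam n e ω) δ (kseq n) : ℝ) ∂(P n))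
      atTop atTop := by
  obtain rfl : kseq = cliqueSize δ ε := funext hk
  refine tendsto_atTop_mono (fun n => ?_)
    (tendsto_choose_mul_pow_choose_two_cliqueSize hδ0 hδ1 hε0 hε1)
  have := hP n
  exact choose_mul_pow_choose_two_le_integral_cliqueCount (hindep n) (hmeas n) (hunif n)
    hδ0.le hδ1.le _
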